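/- arXiv:2411.14876 — 4 statements merged into one kernel-verified Lean document; each statement's English description precedes it below -/
import Mathlib

section
/- Let φ ∈ ℝ with φ/(2π) irrational, let R_φ = [[cos φ, −sin φ], [sin φ, cos φ]], and let γ = [[1,0],[0,0]]. Let T be the smallest closed subsemigroup of GL_2(ℝ) containing {exp(t·γ) : t > 0} ∪ {R_φ}. Then T acts strongly irreducibly on ℝ² and T is proximal. -/
/-! The rotation `R_φ` alone forces strong irreducibility. In `ℝ²` the proper nonzero subspaces are
lines, and by pigeonhole the `R_φ`-orbit of a nonzero vector in an invariant finite union of lines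
puts two iterates `v R_φ^k`, `v R_φ^l` (`k < l`) on the same line. Then `R_φ^(l-k) = R_{(l-k)φ}` has
a real eigenvector, so `sin ((l-k)φ) = 0`, contradicting the irrationality of `φ/2π`.
Proximality is witnessed by `exp γ = diag(e, 1)`. -/

open scoped Matrix

/-- A matrix is proximal if its characteristic polynomial (over ℂ) has a root of algebraic
multiplicity one whose absolute value strictly exceeds that of every other root. -/
def Matrix.IsProximal {d : ℕ} (g : Matrix (Fin d) (Fin d) ℝ) : Prop :=
  ∃ lam : ℂ,
    ((g.map (Complex.ofReal : ℝ → ℂ)).charpoly).rootMultiplicity lam = 1 ∧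
    ∀ mu : ℂ, ((g.map (Complex.ofReal : ℝ → ℂ)).charpoly).IsRoot mu → mu ≠ lam →
      ‖mu‖ < ‖lam‖

/-- A set of invertible matrices acts strongly irreducibly on `ℝ^d` (acting on row vectors from
the right) if there is no finite union of nonzero proper linear subspaces mapped into itself by
every element of the set. -/
def StronglyIrreducibleSet {d : ℕ} (T : Set (Matrix (Fin d) (Fin d) ℝ)ˣ) : Prop :=
  ¬ ∃ (m : ℕ) (W : Fin (m + 1) → Submodule ℝ (Fin d → ℝ)),
      (∀ i, W i ≠ ⊥ ∧ W i ≠ ⊤) ∧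
      ∀ g ∈ T, ∀ y ∈ ⋃ i, (W i : Set (Fin d → ℝ)),
        Matrix.vecMul y (g : Matrix (Fin d) (Fin d) ℝ) ∈ ⋃ i, (W i : Set (Fin d → ℝ))

/-- A set of invertible matrices is proximal if it contains a proximal element. -/
def ProximalSet {d : ℕ} (T : Set (Matrix (Fin d) (Fin d) ℝ)ˣ) : Prop :=
  ∃ g ∈ T, Matrix.IsProximal (g : Matrix (Fin d) (Fin d) ℝ)

/-- The generating set of STATEMENT 10: `{exp (t·γ) : t > 0} ∪ {R_φ}` with `γ = [[1,0],[0,0]]`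
and `R_φ` the rotation by angle `φ`, viewed inside `GL_2(ℝ)`. -/
def gen10 (φ : ℝ) : Set (Matrix (Fin 2) (Fin 2) ℝ)ˣ :=
  {g | ∃ t : ℝ, 0 < t ∧
        (g : Matrix (Fin 2) (Fin 2) ℝ) =
          NormedSpace.exp (t • (!![(1 : ℝ), 0; 0, 0] : Matrix (Fin 2) (Fin 2) ℝ))} ∪
  {g | (g : Matrix (Fin 2) (Fin 2) ℝ) =
        !![Real.cos φ, -Real.sin φ; Real.sin φ, Real.cos φ]}

open Matrix Polynomial Real

noncomputable def rotationMatrix (θ : ℝ) : Matrix (Fin 2) (Fin 2) ℝ :=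
  !![cos θ, -sin θ; sin θ, cos θ]

lemma rotationMatrix_zero : rotationMatrix 0 = 1 := by
  simp [rotationMatrix, one_fin_two]

lemma rotationMatrix_mul (α β : ℝ) :
    rotationMatrix α * rotationMatrix β = rotationMatrix (α + β) := by
  simp only [rotationMatrix, mul_fin_two, cos_add, sin_add]
  congr 1; ring_nf

lemma rotationMatrix_pow (θ : ℝ) (n : ℕ) :
    rotationMatrix θ ^ n = rotationMatrix (n * θ) := by
  induction n with
  | zero => simp [rotationMatrix_zero]
  | succ k ih => rw [pow_succ, ih, rotationMatrix_mul]; congr 1; push_cast; ring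

lemma isUnit_rotationMatrix (θ : ℝ) : IsUnit (rotationMatrix θ) :=
  IsUnit.of_mul_eq_one (rotationMatrix (-θ)) (by simp [rotationMatrix_mul, rotationMatrix_zero])

lemma sin_eq_zero_of_vecMul_rotationMatrix_eq_smul {θ c : ℝ} {v : Fin 2 → ℝ} (hv : v ≠ 0)
    (h : v ᵥ* rotationMatrix θ = c • v) : sin θ = 0 := by
  have h0 := congrFun h 0
  have h1 := congrFun h 1
  simp only [vecMul, dotProduct, rotationMatrix, Fin.isValue, of_apply, cons_val', cons_val_zero,
    cons_val_fin_one, Fin.sum_univ_two, cons_val_one, Pi.smul_apply, smul_eq_mul, mul_neg] at h0 h1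
  have hnorm : 0 < v 0 ^ 2 + v 1 ^ 2 := by
    have : v 0 ≠ 0 ∨ v 1 ≠ 0 := by
      by_contra! h
      exact hv (funext fun i => by fin_cases i <;> simp [h.1, h.2])
    rcases this with h | h <;> positivity
  have : (v 0 ^ 2 + v 1 ^ 2) * sin θ = 0 := by linear_combination v 1 * h0 - v 0 * h1
  exact (mul_eq_zero.mp this).resolve_left hnorm.ne'

lemma sin_nat_mul_ne_zero_of_irrational {φ : ℝ} (hφ : Irrational (φ / (2 * π))) {n : ℕ}
    (hn : n ≠ 0) : sin (n * φ) ≠ 0 := by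
  intro hsin
  obtain ⟨z, hz⟩ := sin_eq_zero_iff.mp hsin
  have hn0 : (0 : ℝ) < n := by positivity
  refine hφ ⟨z / (2 * n), ?_⟩
  push_cast
  rw [div_eq_div_iff (by positivity) (by positivity)]
  linear_combination 2 * hz

lemma Submodule.exists_eq_smul_of_finrank_eq_two {K V : Type*} [DivisionRing K] [AddCommGroup V]
    [Module K V] (hV : Module.finrank K V = 2) {W : Submodule K V} (hW : W ≠ ⊤) {u w : V}
    (hu : u ∈ W) (hu0 : u ≠ 0) (hw : w ∈ W) : ∃ c : K, w = c • u := by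
  have : FiniteDimensional K V := Module.finite_of_finrank_eq_succ hV
  have hline : K ∙ u = W := by
    refine Submodule.eq_of_le_of_finrank_le ((Submodule.span_singleton_le_iff_mem _ _).mpr hu) ?_
    have := Submodule.finrank_lt hW
    rw [finrank_span_singleton hu0]
    omega
  obtain ⟨c, rfl⟩ := Submodule.mem_span_singleton.mp (hline ▸ hw)
  exact ⟨c, rfl⟩

lemma exists_lt_vecMul_pow_mem_of_iUnion_invariant {R : Type*} [Semiring R] {d m : ℕ}
    {W : Fin (m + 1) → Submodule R (Fin d → R)} {g : Matrix (Fin d) (Fin d) R}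
    (hg : ∀ y ∈ ⋃ i, (W i : Set (Fin d → R)), y ᵥ* g ∈ ⋃ i, (W i : Set (Fin d → R)))
    {v : Fin d → R} (hv : v ∈ ⋃ i, (W i : Set (Fin d → R))) :
    ∃ i k l, k < l ∧ v ᵥ* g ^ k ∈ W i ∧ v ᵥ* g ^ l ∈ W i := by
  have horbit : ∀ k : ℕ, v ᵥ* g ^ k ∈ ⋃ i, (W i : Set (Fin d → R)) := by
    intro k
    induction k with
    | zero => simpa using hv
    | succ k ih => simpa [pow_succ, vecMul_vecMul] using hg _ ih
  choose f hf using fun k => Set.mem_iUnion.mp (horbit k)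
  obtain ⟨k, l, hkl, hfkl⟩ := Finite.exists_ne_map_eq_of_infinite f
  rcases hkl.lt_or_gt with hlt | hlt
  · exact ⟨f k, k, l, hlt, hf k, hfkl ▸ hf l⟩
  · exact ⟨f k, l, k, hlt, hfkl ▸ hf l, hf k⟩

theorem stronglyIrreducibleSet_of_forall_pow_ne_smul {T : Set (Matrix (Fin 2) (Fin 2) ℝ)ˣ}
    {g : (Matrix (Fin 2) (Fin 2) ℝ)ˣ} (hg : g ∈ T)
    (h : ∀ n : ℕ, n ≠ 0 → ∀ v : Fin 2 → ℝ, v ≠ 0 → ∀ c : ℝ, v ᵥ* (g : Matrix _ _ ℝ) ^ n ≠ c • v) :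
    StronglyIrreducibleSet T := by
  rintro ⟨m, W, hW, hinv⟩
  obtain ⟨v, hv, hv0⟩ := Submodule.exists_mem_ne_zero_of_ne_bot (hW 0).1
  obtain ⟨i, k, l, hkl, hk, hl⟩ :=
    exists_lt_vecMul_pow_mem_of_iUnion_invariant (hinv g hg) (Set.mem_iUnion.mpr ⟨0, hv⟩)
  have hu0 : v ᵥ* (g : Matrix (Fin 2) (Fin 2) ℝ) ^ k ≠ 0 := fun h0 =>
    hv0 (vecMul_injective_of_isUnit (g.isUnit.pow k) (by simpa using h0))
  obtain ⟨c, hc⟩ := Submodule.exists_eq_smul_of_finrank_eq_two (by simp) (hW i).2 hk hu0 hl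
  refine h (l - k) (by omega) _ hu0 c ?_
  rw [vecMul_vecMul, ← pow_add, Nat.add_sub_cancel' hkl.le, hc]

lemma exp_smul_diagonal_one_zero (t : ℝ) :
    NormedSpace.exp (t • !![(1 : ℝ), 0; 0, 0]) = !![exp t, 0; 0, 1] := by
  have hdiag : t • !![(1 : ℝ), 0; 0, 0] = diagonal ![t, 0] := by
    ext i j; fin_cases i <;> fin_cases j <;> simp
  rw [hdiag, exp_diagonal, Pi.exp_def]
  ext i j; fin_cases i <;> fin_cases j <;> simp [← Real.exp_eq_exp_ℝ]

lemma isProximal_of_abs_lt {a b : ℝ} (hab : |b| < |a|) : (!![a, 0; 0, b]).IsProximal := by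
  have hne : (a : ℂ) ≠ b := fun h => hab.ne' (by rw [Complex.ofReal_injective h])
  have hcharpoly : ((!![a, 0; 0, b]).map (Complex.ofReal : ℝ → ℂ)).charpoly
      = (X - C (a : ℂ)) * (X - C (b : ℂ)) := by
    rw [charpoly_of_isUpperTriangular]
    · simp [Fin.prod_univ_two]
    · intro i j hij; fin_cases i <;> fin_cases j <;> simp_all
  refine ⟨a, ?_, fun μ hμ hμa => ?_⟩
  · rw [hcharpoly, rootMultiplicity_mul (mul_ne_zero (X_sub_C_ne_zero _) (X_sub_C_ne_zero _)),
      rootMultiplicity_X_sub_C, rootMultiplicity_X_sub_C, if_pos rfl, if_neg hne]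
  · rw [hcharpoly, IsRoot, eval_mul, mul_eq_zero] at hμ
    obtain rfl : μ = b := by simpa [sub_eq_zero, hμa] using hμ
    simpa using hab

theorem stronglyIrreducible_and_proximal_gen10_general
    (φ : ℝ) (hφ : Irrational (φ / (2 * Real.pi)))
    (T : Set (Matrix (Fin 2) (Fin 2) ℝ)ˣ)
    (hsub : gen10 φ ⊆ T) :
    StronglyIrreducibleSet T ∧ ProximalSet T := by
  constructor
  · refine stronglyIrreducibleSet_of_forall_pow_ne_smul (g := (isUnit_rotationMatrix φ).unit)
      (hsub (Or.inr rfl)) fun n hn v hv c hvc => ?_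
    rw [IsUnit.unit_spec, rotationMatrix_pow] at hvc
    exact sin_nat_mul_ne_zero_of_irrational hφ hn
      (sin_eq_zero_of_vecMul_rotationMatrix_eq_smul hv hvc)
  · refine ⟨(isUnit_exp ((1 : ℝ) • !![(1 : ℝ), 0; 0, 0])).unit,
      hsub (Or.inl ⟨1, one_pos, rfl⟩), ?_⟩
    rw [IsUnit.unit_spec, exp_smul_diagonal_one_zero]
    exact isProximal_of_abs_lt (by rw [abs_one, abs_exp, one_lt_exp_iff]; exact one_pos)

/-- For `φ` an irrational multiple of `2π`, the smallest closed subsemigroup `T`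
of `GL_2(ℝ)` containing `{exp (t·γ) : t > 0} ∪ {R_φ}` acts strongly irreducibly on `ℝ²` and is
proximal. -/
theorem stronglyIrreducible_and_proximal_gen10
    (φ : ℝ) (hφ : Irrational (φ / (2 * Real.pi)))
    (T : Set (Matrix (Fin 2) (Fin 2) ℝ)ˣ)
    (hsub : gen10 φ ⊆ T) (hclosed : IsClosed T)
    (hmul : ∀ a ∈ T, ∀ b ∈ T, a * b ∈ T)
    (hmin : ∀ T' : Set (Matrix (Fin 2) (Fin 2) ℝ)ˣ, IsClosed T' →
      (∀ a ∈ T', ∀ b ∈ T', a * b ∈ T') → gen10 φ ⊆ T' → T ⊆ T') :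
    StronglyIrreducibleSet T ∧ ProximalSet T :=
  stronglyIrreducible_and_proximal_gen10_general φ hφ T hsub
end

section
/- Let N ≥ 1 and let A_0, A_1, …, A_N and D_1, …, D_N be real d×d matrices. For 0 ≤ i ≤ j ≤ N define the partial product P(i,j) := A_i · (Id + D_{i+1}) · A_{i+1} · (Id + D_{i+2}) · ⋯ · (Id + D_j) · A_j (so that P(i,i) = A_i). Then P(0,N) = A_0·A_1·⋯·A_N + Σ_{ℓ=1}^{N} (−1)^{ℓ+1} Σ_{1 ≤ k_1 < k_2 < ⋯ < k_ℓ ≤ N} P(0, k_1 − 1) · D_{k_1} · P(k_1, k_2 − 1) · D_{k_2} · ⋯ · D_{k_ℓ} · P(k_ℓ, N). -/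
/-- The partial product `P(i,j) = A_i (Id + D_{i+1}) A_{i+1} ⋯ (Id + D_j) A_j`. -/
noncomputable def partialProd {d : ℕ} (A D : ℕ → Matrix (Fin d) (Fin d) ℝ) (i j : ℕ) :
    Matrix (Fin d) (Fin d) ℝ :=
  A i * ((List.range (j - i)).map (fun t => (1 + D (i + t + 1)) * A (i + t + 1))).prod

/-- Given a strictly increasing list `[k₁, …, k_ℓ]` of jump indices, the corresponding term
`P(prev, k₁ − 1) · D_{k₁} · P(k₁, k₂ − 1) · D_{k₂} ⋯ D_{k_ℓ} · P(k_ℓ, N)`. -/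
noncomputable def jumpTerm {d : ℕ} (A D : ℕ → Matrix (Fin d) (Fin d) ℝ) (N : ℕ) :
    ℕ → List ℕ → Matrix (Fin d) (Fin d) ℝ
  | prev, [] => partialProd A D prev N
  | prev, k :: ks => partialProd A D prev (k - 1) * D k * jumpTerm A D N k ks

/-! Weight each jump set `s ⊆ {1, …, N}` by `(-1) ^ #s`. The signed sum of all jump terms,
whose `s = ∅` term is `P(0, N)`, is `A₀ ⋯ A_N`, by induction on `N`: the jump sets of
`{1, …, N + 1}` avoiding `N + 1` give the terms for `N` times `(1 + D_{N+1}) A_{N+1}`, those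
containing it give the same terms times `-D_{N+1} A_{N+1}`, and together they leave `A_{N+1}`. -/

open Finset

theorem Finset.sort_insert_of_forall_lt {α : Type*} [LinearOrder α] {s : Finset α} {a : α}
    (h : ∀ b ∈ s, b < a) :
    (insert a s).sort (· ≤ ·) = s.sort (· ≤ ·) ++ [a] := by
  have hsorted : (s.sort (· ≤ ·) ++ [a]).Pairwise (· ≤ ·) :=
    List.pairwise_append.2 ⟨s.pairwise_sort _, List.pairwise_singleton _ a,
      fun b hb a' ha' => (List.mem_singleton.1 ha') ▸ (h b ((s.mem_sort _).1 hb)).le⟩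
  have hnodup : (s.sort (· ≤ ·) ++ [a]).Nodup :=
    List.nodup_append.2 ⟨s.sort_nodup _, List.nodup_singleton a,
      fun b hb a' ha' => (List.mem_singleton.1 ha') ▸ (h b ((s.mem_sort _).1 hb)).ne⟩
  have hset : (s.sort (· ≤ ·) ++ [a]).toFinset = insert a s := by
    ext; simp
  rw [← hset]
  exact (List.toFinset_sort _ hnodup).2 hsorted

section

variable {d : ℕ} (A D : ℕ → Matrix (Fin d) (Fin d) ℝ)

theorem partialProd_self (i : ℕ) : partialProd A D i i = A i := by
  simp [partialProd]

theorem partialProd_add_one_right {i j : ℕ} (h : i ≤ j) :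
    partialProd A D i (j + 1) = partialProd A D i j * ((1 + D (j + 1)) * A (j + 1)) := by
  obtain ⟨n, rfl⟩ := Nat.exists_eq_add_of_le h
  simp only [partialProd, Nat.add_sub_cancel_left,
    List.range_succ, List.map_append, List.prod_append, List.map_singleton,
    List.prod_singleton, mul_assoc, add_assoc]

theorem jumpTerm_add_one {N : ℕ} :
    ∀ (prev : ℕ) (ks : List ℕ), prev ≤ N → (∀ k ∈ ks, k ≤ N) →
      jumpTerm A D (N + 1) prev ks = jumpTerm A D N prev ks * ((1 + D (N + 1)) * A (N + 1))
  | prev, [], hprev, _ => partialProd_add_one_right A D hprev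
  | prev, k :: ks, _, hks => by
    rw [jumpTerm, jumpTerm, jumpTerm_add_one k ks (hks k List.mem_cons_self)
      fun j hj => hks j (List.mem_cons_of_mem k hj)]
    simp only [mul_assoc]

theorem jumpTerm_append_singleton_add_one {N : ℕ} :
    ∀ (prev : ℕ) (ks : List ℕ),
      jumpTerm A D (N + 1) prev (ks ++ [N + 1]) = jumpTerm A D N prev ks * (D (N + 1) * A (N + 1))
  | prev, [] => by
    simp only [List.nil_append, jumpTerm, Nat.add_sub_cancel, partialProd_self, mul_assoc]
  | prev, k :: ks => by
    rw [List.cons_append, jumpTerm, jumpTerm, jumpTerm_append_singleton_add_one k ks]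
    simp only [mul_assoc]

theorem sum_powerset_Icc_neg_one_pow_card_smul_jumpTerm (N : ℕ) :
    ∑ s ∈ (Icc 1 N).powerset, (-1 : ℝ) ^ s.card • jumpTerm A D N 0 (s.sort (· ≤ ·)) =
      ((List.range (N + 1)).map A).prod := by
  induction N with
  | zero => simp [jumpTerm, partialProd]
  | succ N ih =>
    have hN : N + 1 ∉ Icc 1 N := by simp
    have le_of_mem {s} (hs : s ∈ (Icc 1 N).powerset) {k} (hk : k ∈ s) : k ≤ N :=
      (mem_Icc.1 (mem_powerset.1 hs hk)).2
    have without_jump : ∀ s ∈ (Icc 1 N).powerset,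
        (-1 : ℝ) ^ s.card • jumpTerm A D (N + 1) 0 (s.sort (· ≤ ·)) =
          ((-1 : ℝ) ^ s.card • jumpTerm A D N 0 (s.sort (· ≤ ·))) *
            ((1 + D (N + 1)) * A (N + 1)) := by
      intro s hs
      rw [jumpTerm_add_one A D 0 _ N.zero_le fun k hk => le_of_mem hs ((s.mem_sort _).1 hk),
        smul_mul_assoc]
    have with_jump : ∀ s ∈ (Icc 1 N).powerset,
        (-1 : ℝ) ^ (insert (N + 1) s).card •
            jumpTerm A D (N + 1) 0 ((insert (N + 1) s).sort (· ≤ ·)) =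
          -(((-1 : ℝ) ^ s.card • jumpTerm A D N 0 (s.sort (· ≤ ·))) *
            (D (N + 1) * A (N + 1))) := by
      intro s hs
      rw [card_insert_of_notMem fun h => hN (mem_powerset.1 hs h),
        Finset.sort_insert_of_forall_lt fun k hk => Nat.lt_succ_of_le (le_of_mem hs hk),
        jumpTerm_append_singleton_add_one, pow_succ, mul_neg_one, neg_smul, smul_mul_assoc]
    rw [← insert_Icc_right_eq_Icc_add_one (by omega), sum_powerset_insert hN,
      sum_congr rfl without_jump, sum_congr rfl with_jump, sum_neg_distrib,
      ← sum_mul, ← sum_mul, ih, ← sub_eq_add_neg, ← mul_sub, add_mul, one_mul,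
      add_sub_cancel_right, List.range_succ (n := N + 1), List.map_append, List.prod_append,
      List.map_singleton, List.prod_singleton]

end

theorem partialProd_eq_prod_add_inclusion_exclusion_general
    (d N : ℕ) (A D : ℕ → Matrix (Fin d) (Fin d) ℝ) :
    partialProd A D 0 N =
      ((List.range (N + 1)).map A).prod +
        ∑ l ∈ Finset.Icc 1 N, (-1 : ℝ) ^ (l + 1) •
          ∑ s ∈ Finset.powersetCard l (Finset.Icc 1 N),
            jumpTerm A D N 0 (s.sort (· ≤ ·)) := by
  have key := sum_powerset_Icc_neg_one_pow_card_smul_jumpTerm A D N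
  rw [sum_powerset, Nat.card_Icc, Nat.add_sub_cancel, range_eq_Ico,
    sum_eq_sum_Ico_succ_bot N.succ_pos, zero_add, Nat.succ_eq_add_one, Ico_add_one_right_eq_Icc,
    powersetCard_zero, sum_singleton, card_empty, pow_zero, one_smul, sort_empty, jumpTerm] at key
  have sign (l : ℕ) :
      (-1 : ℝ) ^ (l + 1) • ∑ s ∈ powersetCard l (Icc 1 N),
          jumpTerm A D N 0 (s.sort (· ≤ ·)) =
        -∑ s ∈ powersetCard l (Icc 1 N),
          (-1 : ℝ) ^ s.card • jumpTerm A D N 0 (s.sort (· ≤ ·)) := by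
    rw [smul_sum, ← sum_neg_distrib]
    refine sum_congr rfl fun s hs => ?_
    rw [(mem_powersetCard.1 hs).2, pow_succ, mul_neg_one, neg_smul]
  rw [sum_congr rfl fun l _ => sign l, sum_neg_distrib, ← sub_eq_add_neg,
    eq_sub_iff_add_eq]
  exact key

/-- inclusion–exclusion identity for products with jump factors:
`P(0,N) = A_0⋯A_N + Σ_{ℓ=1}^{N} (−1)^{ℓ+1} Σ_{1 ≤ k₁ < ⋯ < k_ℓ ≤ N}
P(0,k₁−1)·D_{k₁}·P(k₁,k₂−1)·D_{k₂}⋯D_{k_ℓ}·P(k_ℓ,N)`,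
where the inner sum ranges over all `ℓ`-element subsets of `{1, …, N}` listed increasingly. -/
theorem partialProd_eq_prod_add_inclusion_exclusion
    (d N : ℕ) (hN : 1 ≤ N) (A D : ℕ → Matrix (Fin d) (Fin d) ℝ) :
    partialProd A D 0 N =
      ((List.range (N + 1)).map A).prod +
        ∑ l ∈ Finset.Icc 1 N, (-1 : ℝ) ^ (l + 1) •
          ∑ s ∈ Finset.powersetCard l (Finset.Icc 1 N),
            jumpTerm A D N 0 (s.sort (· ≤ ·)) :=
  partialProd_eq_prod_add_inclusion_exclusion_general d N A D
end

section
/- Let d ≥ 2 and let X be a real d×d matrix. Fix column indices j, ℓ ∈ {1, …, d} with j ≠ ℓ, and let m, n ∈ {1, …, d} be arbitrary. For row indices i ≠ k, let X_{[i,k;j,ℓ]} denote the (d−2)×(d−2) matrix obtained from X by deleting rows i and k and columns j and ℓ, and set k' := k if k < i and k' := k − 1 if k > i, and ℓ' := ℓ if ℓ < j and ℓ' := ℓ − 1 if ℓ > j. Then Σ_{i≠k} (−1)^{i + j + k' + ℓ'} · det(X_{[i,k;j,ℓ]}) · X_{i,m} · X_{k,n} = det(X) · (δ_{j,m}·δ_{ℓ,n}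 − δ_{j,n}·δ_{ℓ,m}), where the sum runs over all ordered pairs (i,k) with i, k ∈ {1, …, d}, i ≠ k, and δ is the Kronecker delta. In particular the sum equals det(X) when (m,n) = (j,ℓ), equals −det(X) when (m,n) = (ℓ,j), and vanishes in all other cases. -/
/-- The increasing enumeration `Fin n → Fin (n+2)` of the complement of a pair
`a < b` in `Fin (n+2)`, used to delete the two rows (or columns) `a` and `b` of a matrix. -/
def delTwo {n : ℕ} (a b : Fin (n + 2)) (hab : a < b) : Fin n → Fin (n + 2) := fun t =>
  b.succAbove ((a.castLT (by
    have h1 : (a : ℕ) < (b : ℕ) := hab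
    have h2 := b.isLt
    omega)).succAbove t)

lemma val_succAbove'' {n : ℕ} (p : Fin (n + 1)) (i : Fin n) :
    (p.succAbove i : ℕ) = if (i : ℕ) < (p : ℕ) then (i : ℕ) else (i : ℕ) + 1 := by
  rw [Fin.succAbove]
  split_ifs with h1 h2 h2 <;>
    simp_all [Fin.lt_def, Fin.coe_castSucc, Fin.val_succ] <;> omega

lemma strictMono_eq_of_avoid {n : ℕ} {a b : Fin (n + 2)} (hab : a ≠ b)
    {f g : Fin n → Fin (n + 2)}
    (hf : StrictMono f) (hg : StrictMono g)
    (hfa : ∀ t, f t ≠ a) (hfb : ∀ t, f t ≠ b)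
    (hga : ∀ t, g t ≠ a) (hgb : ∀ t, g t ≠ b) : f = g := by
  have hcard : ({a, b}ᶜ : Finset (Fin (n + 2))).card = n := by
    rw [Finset.card_compl, Finset.card_insert_of_notMem (by simpa using hab),
      Finset.card_singleton]
    simp
  have hf' : ∀ x, f x ∈ ({a, b}ᶜ : Finset (Fin (n + 2))) := fun x => by
    simp [Finset.mem_compl, hfa x, hfb x]
  have hg' : ∀ x, g x ∈ ({a, b}ᶜ : Finset (Fin (n + 2))) := fun x => by
    simp [Finset.mem_compl, hga x, hgb x]
  rw [Finset.orderEmbOfFin_unique hcard hf' hf, Finset.orderEmbOfFin_unique hcard hg' hg]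

lemma delTwo_strictMono {n : ℕ} (a b : Fin (n + 2)) (hab : a < b) :
    StrictMono (delTwo a b hab) :=
  fun _ _ h => (Fin.strictMono_succAbove b) ((Fin.strictMono_succAbove _) h)

lemma succAbove_castLT {n : ℕ} (a b : Fin (n + 2)) (hab : a < b) :
    b.succAbove (a.castLT (by have h1 : (a:ℕ) < (b:ℕ) := hab; have := b.isLt; omega)) = a := by
  apply Fin.ext
  have h1 : (a : ℕ) < (b : ℕ) := hab
  rw [val_succAbove'']
  simp only [Fin.coe_castLT]
  rw [if_pos h1]

lemma delTwo_ne_right {n : ℕ} (a b : Fin (n + 2)) (hab : a < b) (t : Fin n) :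
    delTwo a b hab t ≠ b := Fin.succAbove_ne _ _

lemma delTwo_ne_left {n : ℕ} (a b : Fin (n + 2)) (hab : a < b) (t : Fin n) :
    delTwo a b hab t ≠ a := by
  intro h
  have key := succAbove_castLT a b hab
  exact Fin.succAbove_ne _ _ (Fin.succAbove_right_injective (h.trans key.symm))

lemma succAbove_comp_eq_delTwo {n : ℕ} (p : Fin (n + 2)) (q : Fin (n + 1)) :
    (fun t => p.succAbove (q.succAbove t))
      = delTwo (min p (p.succAbove q)) (max p (p.succAbove q))
          (min_lt_max.mpr (Fin.ne_succAbove p q)) := by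
  have hne : p ≠ p.succAbove q := Fin.ne_succAbove p q
  have hmm : min p (p.succAbove q) ≠ max p (p.succAbove q) :=
    ne_of_lt (min_lt_max.mpr hne)
  apply strictMono_eq_of_avoid hmm
  · exact fun _ _ h => (Fin.strictMono_succAbove p) ((Fin.strictMono_succAbove q) h)
  · exact delTwo_strictMono _ _ _
  · intro t h
    rcases min_cases p (p.succAbove q) with ⟨hm, _⟩ | ⟨hm, _⟩ <;> rw [hm] at h
    · exact Fin.succAbove_ne p _ h
    · exact Fin.succAbove_ne q _ (Fin.succAbove_right_injective h)
  · intro t h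
    rcases max_cases p (p.succAbove q) with ⟨hm, _⟩ | ⟨hm, _⟩ <;> rw [hm] at h
    · exact Fin.succAbove_ne p _ h
    · exact Fin.succAbove_ne q _ (Fin.succAbove_right_injective h)
  · exact delTwo_ne_left _ _ _
  · exact delTwo_ne_right _ _ _

lemma val_of_succAbove_eq {n : ℕ} {p k : Fin (n + 2)} {q : Fin (n + 1)}
    (h : p.succAbove q = k) :
    (if (k : ℕ) < (p : ℕ) then (k : ℕ) else (k : ℕ) - 1) = (q : ℕ) := by
  have hq : (k : ℕ) = if (q : ℕ) < (p : ℕ) then (q : ℕ) else (q : ℕ) + 1 := by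
    rw [← h, val_succAbove'']
  split_ifs at hq ⊢ <;> omega

lemma succAbove_comp_eq_delTwo' {n : ℕ} (p k : Fin (n + 2)) (q : Fin (n + 1))
    (h : p.succAbove q = k) (hpk : p ≠ k) :
    p.succAbove ∘ q.succAbove = delTwo (min p k) (max p k) (min_lt_max.mpr hpk) := by
  subst h
  exact succAbove_comp_eq_delTwo p q

lemma double_laplace {d : ℕ} (Y : Matrix (Fin (d + 2)) (Fin (d + 2)) ℝ)
    (j l : Fin (d + 2)) (hjl : j ≠ l) :
    (∑ i : Fin (d + 2), ∑ k : Fin (d + 2),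
      if h : i = k then 0
      else (-1 : ℝ) ^ ((i : ℕ) + (j : ℕ)
              + (if (k : ℕ) < (i : ℕ) then (k : ℕ) else (k : ℕ) - 1)
              + (if (l : ℕ) < (j : ℕ) then (l : ℕ) else (l : ℕ) - 1))
          * (Y.submatrix (delTwo (min i k) (max i k) (min_lt_max.mpr h))
                         (delTwo (min j l) (max j l) (min_lt_max.mpr hjl))).det
          * Y i j * Y k l)
    = Y.det := by
  obtain ⟨l'', hl''⟩ := Fin.exists_succAbove_eq hjl.symm
  have hel : (if (l : ℕ) < (j : ℕ) then (l : ℕ) else (l : ℕ) - 1) = (l'' : ℕ) :=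
    val_of_succAbove_eq hl''
  rw [Matrix.det_succ_column Y j]
  refine Finset.sum_congr rfl fun i _ => ?_
  rw [Fin.sum_univ_succAbove _ i, dif_pos rfl, zero_add,
    Matrix.det_succ_column (Y.submatrix i.succAbove j.succAbove) l'', Finset.mul_sum]
  refine Finset.sum_congr rfl fun k'' _ => ?_
  have hik : i ≠ i.succAbove k'' := Fin.ne_succAbove i k''
  rw [dif_neg hik]
  have hek : (if ((i.succAbove k'' : Fin (d+2)) : ℕ) < (i : ℕ)
      then ((i.succAbove k'' : Fin (d+2)) : ℕ) else ((i.succAbove k'' : Fin (d+2)) : ℕ) - 1)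
      = (k'' : ℕ) := val_of_succAbove_eq rfl
  rw [hek, hel]
  have hdet : (Y.submatrix (delTwo (min i (i.succAbove k'')) (max i (i.succAbove k''))
        (min_lt_max.mpr hik)) (delTwo (min j l) (max j l) (min_lt_max.mpr hjl))).det
      = ((Y.submatrix i.succAbove j.succAbove).submatrix k''.succAbove l''.succAbove).det := by
    rw [Matrix.submatrix_submatrix, succAbove_comp_eq_delTwo' i (i.succAbove k'') k'' rfl hik,
      succAbove_comp_eq_delTwo' j l l'' hl'' hjl]
  rw [hdet]
  have hentry : (Y.submatrix i.succAbove j.succAbove) k'' l'' = Y (i.succAbove k'') l := by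
    rw [Matrix.submatrix_apply, hl'']
  rw [hentry]
  rw [show (i : ℕ) + (j : ℕ) + (k'' : ℕ) + (l'' : ℕ)
      = ((i : ℕ) + (j : ℕ)) + ((k'' : ℕ) + (l'' : ℕ)) by ring, pow_add]
  ring

/-- the signed double-minor identity (double Laplace expansion). For a real
`d × d` matrix `X` (`d ≥ 2`), fixed distinct column indices `j ≠ l`, and arbitrary column
indices `m`, `n`:
`Σ_{i ≠ k} (−1)^{i+j+k'+l'} det(X_{[i,k;j,l]}) X_{i,m} X_{k,n}
  = det X · (δ_{j,m} δ_{l,n} − δ_{j,n} δ_{l,m})`,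
where `k' = k` if `k < i` and `k' = k − 1` if `k > i`, similarly for `l'` w.r.t. `j`,
and `X_{[i,k;j,l]}` is obtained from `X` by deleting rows `i, k` and columns `j, l`.
(Indices here are 0-based; the sign agrees with the 1-based version.) -/
theorem sum_signed_double_minor_eq_det_mul
    {d : ℕ} (X : Matrix (Fin (d + 2)) (Fin (d + 2)) ℝ)
    (j l : Fin (d + 2)) (hjl : j ≠ l) (m n : Fin (d + 2)) :
    (∑ i : Fin (d + 2), ∑ k : Fin (d + 2),
      if h : i = k then 0
      else (-1 : ℝ) ^ ((i : ℕ) + (j : ℕ)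
              + (if (k : ℕ) < (i : ℕ) then (k : ℕ) else (k : ℕ) - 1)
              + (if (l : ℕ) < (j : ℕ) then (l : ℕ) else (l : ℕ) - 1))
          * (X.submatrix (delTwo (min i k) (max i k) (min_lt_max.mpr h))
                         (delTwo (min j l) (max j l) (min_lt_max.mpr hjl))).det
          * X i m * X k n)
    = X.det * ((if j = m then (1 : ℝ) else 0) * (if l = n then 1 else 0)
        - (if j = n then 1 else 0) * (if l = m then 1 else 0)) := by
    classical
  set σ : Fin (d + 2) → Fin (d + 2) := fun c => if c = j then m else if c = l then n else c
    with hσ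
  have hσj : σ j = m := by simp [hσ]
  have hσl : σ l = n := by simp [hσ, hjl.symm, if_neg]
  have hσo : ∀ c, c ≠ j → c ≠ l → σ c = c := fun c h1 h2 => by simp [hσ, h1, h2]
  set Y : Matrix (Fin (d + 2)) (Fin (d + 2)) ℝ := X.submatrix id σ with hYdef
  have hYentry : ∀ i c, Y i c = X i (σ c) := fun i c => rfl
  have hdelne : ∀ t, σ (delTwo (min j l) (max j l) (min_lt_max.mpr hjl) t)
      = delTwo (min j l) (max j l) (min_lt_max.mpr hjl) t := by
    intro t
    have h1 := delTwo_ne_left (min j l) (max j l) (min_lt_max.mpr hjl) t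
    have h2 := delTwo_ne_right (min j l) (max j l) (min_lt_max.mpr hjl) t
    have hne_j : delTwo (min j l) (max j l) (min_lt_max.mpr hjl) t ≠ j := by
      rcases le_total j l with h | h
      · exact fun hc => h1 (hc.trans (min_eq_left h).symm)
      · exact fun hc => h2 (hc.trans (max_eq_left h).symm)
    have hne_l : delTwo (min j l) (max j l) (min_lt_max.mpr hjl) t ≠ l := by
      rcases le_total j l with h | h
      · exact fun hc => h2 (hc.trans (max_eq_right h).symm)
      · exact fun hc => h1 (hc.trans (min_eq_right h).symm)
    exact hσo _ hne_j hne_l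
  have hLHS : (∑ i : Fin (d + 2), ∑ k : Fin (d + 2),
      if h : i = k then 0
      else (-1 : ℝ) ^ ((i : ℕ) + (j : ℕ)
              + (if (k : ℕ) < (i : ℕ) then (k : ℕ) else (k : ℕ) - 1)
              + (if (l : ℕ) < (j : ℕ) then (l : ℕ) else (l : ℕ) - 1))
          * (X.submatrix (delTwo (min i k) (max i k) (min_lt_max.mpr h))
                         (delTwo (min j l) (max j l) (min_lt_max.mpr hjl))).det
          * X i m * X k n) = Y.det := by
    rw [← double_laplace Y j l hjl]
    refine Finset.sum_congr rfl fun i _ => Finset.sum_congr rfl fun k _ => ?_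
    by_cases h : i = k
    · rw [dif_pos h, dif_pos h]
    · rw [dif_neg h, dif_neg h]
      have hsub : Y.submatrix (delTwo (min i k) (max i k) (min_lt_max.mpr h))
            (delTwo (min j l) (max j l) (min_lt_max.mpr hjl))
          = X.submatrix (delTwo (min i k) (max i k) (min_lt_max.mpr h))
            (delTwo (min j l) (max j l) (min_lt_max.mpr hjl)) := by
        rw [hYdef, Matrix.submatrix_submatrix]
        exact congrArg₂ X.submatrix (funext fun t => rfl) (funext hdelne)
      rw [hsub, hYentry, hYentry, hσj, hσl]
  rw [hLHS]
  -- now compute det Y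
  by_cases hjm : j = m
  · by_cases hln : l = n
    · have hσid : σ = id := by
        funext c
        by_cases h1 : c = j
        · rw [h1, hσj, ← hjm]; rfl
        · by_cases h2 : c = l
          · rw [h2, hσl, ← hln]; rfl
          · rw [hσo c h1 h2]; rfl
      rw [hYdef, hσid, Matrix.submatrix_id_id]
      have hjn : j ≠ n := fun h => hjl (h.trans hln.symm)
      rw [if_pos hjm, if_pos hln, if_neg hjn]
      ring
    · -- l ≠ n : det Y = 0
      have hdet0 : Y.det = 0 := by
        by_cases hjn : j = n
        · -- columns j and l of Y equal (both X · m since n = j = m... n=j, m=j so σ l = n = j, σ j = m = j)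
          refine Matrix.det_zero_of_column_eq hjl fun r => ?_
          rw [hYentry, hYentry, hσj, hσl, ← hjm, ← hjn]
        · -- n ∉ {j, l} : columns l and n equal
          have hnl : l ≠ n := hln
          have hnj : n ≠ j := fun h => hjn h.symm
          refine Matrix.det_zero_of_column_eq hnl fun r => ?_
          rw [hYentry, hYentry, hσl, hσo n hnj (fun h => hln h.symm)]
      rw [hdet0, if_pos hjm, if_neg hln]
      have hlm : l ≠ m := fun h => hjl (hjm.trans h.symm)
      rw [if_neg hlm]
      ring
  · by_cases hlm : l = m
    · by_cases hjn : j = n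
      · -- swap case
        have hσswap : σ = ⇑(Equiv.swap j l) := by
          funext c
          by_cases h1 : c = j
          · rw [h1, hσj, ← hlm, Equiv.swap_apply_left]
          · by_cases h2 : c = l
            · rw [h2, hσl, ← hjn, Equiv.swap_apply_right]
            · rw [hσo c h1 h2, Equiv.swap_apply_of_ne_of_ne h1 h2]
        rw [hYdef, hσswap, Matrix.det_permute' (Equiv.swap j l) X,
          Equiv.Perm.sign_swap hjl]
        rw [if_neg hjm, if_pos hjn, if_pos hlm]
        push_cast
        ring
      · have hdet0 : Y.det = 0 := by
          by_cases hln : l = n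
          · -- σ j = l, σ l = l → columns j, l equal
            refine Matrix.det_zero_of_column_eq hjl fun r => ?_
            rw [hYentry, hYentry, hσj, hσl, ← hlm, ← hln]
          · have hnj : n ≠ j := fun h => hjn h.symm
            refine Matrix.det_zero_of_column_eq (fun h => hln h : l ≠ n) fun r => ?_
            rw [hYentry, hYentry, hσl, hσo n hnj (fun h => hln h.symm)]
        rw [hdet0, if_neg hjm, if_neg hjn]
        ring
    · -- m ∉ {j, l} : columns j and m equal
      have hdet0 : Y.det = 0 := by
        refine Matrix.det_zero_of_column_eq (fun h => hjm h : j ≠ m) fun r => ?_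
        rw [hYentry, hYentry, hσj, hσo m (fun h => hjm h.symm) (fun h => hlm h.symm)]
      rw [hdet0, if_neg hjm, if_neg hlm]
      ring
end

section
/- Let Φ denote the cumulative distribution function of the standard normal distribution, Φ(z) = (2π)^{-1/2} ∫_{−∞}^z e^{−u²/2} du. Then for every z ∈ ℝ, every real n ≥ 1 and every r ∈ [0,1]: |Φ(√((n+r)/n) · z) − Φ(z)| ≤ √r / √n. -/
/-!
The scaled point `c z`, `c = √((n + r) / n) ≥ 1`, lies on the ray from `z` away from the
origin, so `t ↦ Φ (t z)` has derivative `z φ (t z)` with `|z φ (t z)| ≤ |t z| φ (t z) ≤ 1` on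
`t ≥ 1`. The mean value inequality gives `|Φ (c z) - Φ z| ≤ c - 1`, and
`√(n + r) ≤ √n + √r` bounds `c - 1` by `√r / √n`.
-/

open MeasureTheory

/-- The standard normal cumulative distribution function. -/
noncomputable def stdNormalCDF (z : ℝ) : ℝ :=
  (Real.sqrt (2 * Real.pi))⁻¹ * ∫ u in Set.Iic z, Real.exp (-u ^ 2 / 2)

open Real Set

noncomputable def stdNormalPDF (x : ℝ) : ℝ :=
  (√(2 * π))⁻¹ * exp (-x ^ 2 / 2)

theorem stdNormalPDF_nonneg (x : ℝ) : 0 ≤ stdNormalPDF x := by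
  unfold stdNormalPDF
  positivity

theorem integrable_exp_neg_sq_div_two : Integrable fun u : ℝ => exp (-u ^ 2 / 2) := by
  convert integrable_exp_neg_mul_sq (b := 1 / 2) (by norm_num) using 3 with u
  ring

theorem stdNormalCDF_eq_add_intervalIntegral (x : ℝ) :
    stdNormalCDF x = stdNormalCDF 0 + (√(2 * π))⁻¹ * ∫ u in (0 : ℝ)..x, exp (-u ^ 2 / 2) := by
  unfold stdNormalCDF
  rw [← intervalIntegral.integral_Iic_sub_Iic integrable_exp_neg_sq_div_two.integrableOn
    integrable_exp_neg_sq_div_two.integrableOn]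
  ring

theorem hasDerivAt_stdNormalCDF (x : ℝ) : HasDerivAt stdNormalCDF (stdNormalPDF x) x := by
  have hcont : Continuous fun u : ℝ => exp (-u ^ 2 / 2) := by fun_prop
  have hint : HasDerivAt (fun x => ∫ u in (0 : ℝ)..x, exp (-u ^ 2 / 2)) (exp (-x ^ 2 / 2)) x :=
    intervalIntegral.integral_hasDerivAt_right integrable_exp_neg_sq_div_two.intervalIntegrable
    hcont.aestronglyMeasurable.stronglyMeasurableAtFilter hcont.continuousAt
  rw [funext stdNormalCDF_eq_add_intervalIntegral]
  exact (hint.const_mul _).const_add _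

theorem abs_le_exp_sq_div_two (x : ℝ) : |x| ≤ exp (x ^ 2 / 2) := by
  have h : |x| ≤ x ^ 2 / 2 + 1 := by nlinarith [sq_abs x, sq_nonneg (|x| - 1)]
  exact h.trans (add_one_le_exp _)

theorem abs_mul_stdNormalPDF_le_one (x : ℝ) : |x| * stdNormalPDF x ≤ 1 := by
  have hexp : |x| * exp (-x ^ 2 / 2) ≤ 1 := by
    rw [neg_div, exp_neg, ← div_eq_mul_inv, div_le_one (exp_pos _)]
    exact abs_le_exp_sq_div_two x
  have hnorm : (√(2 * π))⁻¹ ≤ 1 :=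
    inv_le_one_of_one_le₀ (one_le_sqrt.mpr (by linarith [pi_gt_three]))
  calc |x| * stdNormalPDF x = (√(2 * π))⁻¹ * (|x| * exp (-x ^ 2 / 2)) := by
        unfold stdNormalPDF; ring
    _ ≤ 1 := mul_le_one₀ hnorm (by positivity) hexp

theorem abs_stdNormalCDF_mul_sub_le {c : ℝ} (hc : 1 ≤ c) (z : ℝ) :
    |stdNormalCDF (c * z) - stdNormalCDF z| ≤ c - 1 := by
  have hderiv (t : ℝ) :
      HasDerivAt (fun t => stdNormalCDF (t * z)) (stdNormalPDF (t * z) * z) t :=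
    (hasDerivAt_stdNormalCDF (t * z)).comp (h := fun t => t * z) t (hasDerivAt_mul_const z)
  have hbound : ∀ t ∈ Ico 1 c, ‖stdNormalPDF (t * z) * z‖ ≤ 1 := fun t ht => by
    calc ‖stdNormalPDF (t * z) * z‖ = |z| * stdNormalPDF (t * z) := by
          rw [norm_eq_abs, abs_mul, abs_of_nonneg (stdNormalPDF_nonneg _), mul_comm]
      _ ≤ |t * z| * stdNormalPDF (t * z) := by
          refine mul_le_mul_of_nonneg_right ?_ (stdNormalPDF_nonneg _)
          rw [abs_mul]
          exact le_mul_of_one_le_left (abs_nonneg z) (ht.1.trans (le_abs_self t))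
      _ ≤ 1 := abs_mul_stdNormalPDF_le_one _
  simpa using norm_image_sub_le_of_norm_deriv_le_segment'
    (fun t _ => (hderiv t).hasDerivWithinAt) hbound c ⟨hc, le_rfl⟩

theorem sqrt_add_le_sqrt_add_sqrt {x y : ℝ} (hx : 0 ≤ x) (hy : 0 ≤ y) :
    √(x + y) ≤ √x + √y := by
  rw [sqrt_le_iff]
  refine ⟨by positivity, ?_⟩
  rw [add_sq, sq_sqrt hx, sq_sqrt hy]
  nlinarith [sqrt_nonneg x, sqrt_nonneg y]

theorem sqrt_add_div_self_sub_one_le {n r : ℝ} (hn : 0 < n) (hr : 0 ≤ r) :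
    √((n + r) / n) - 1 ≤ √r / √n := by
  have hsn : 0 < √n := sqrt_pos.mpr hn
  have h : √((n + r) / n) ≤ 1 + √r / √n :=
    calc √((n + r) / n) = √(n + r) / √n := sqrt_div' _ hn.le
      _ ≤ (√n + √r) / √n := by gcongr; exact sqrt_add_le_sqrt_add_sqrt hn.le hr
      _ = 1 + √r / √n := by rw [add_div, div_self hsn.ne']
  linarith

theorem abs_stdNormalCDF_scale_sub_le_general (z : ℝ) (n : ℝ) (hn : 1 ≤ n)
    (r : ℝ) (hr0 : 0 ≤ r) :
    |stdNormalCDF (Real.sqrt ((n + r) / n) * z) - stdNormalCDF z|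
      ≤ Real.sqrt r / Real.sqrt n := by
  have hn0 : 0 < n := zero_lt_one.trans_le hn
  have hscale : 1 ≤ √((n + r) / n) := one_le_sqrt.mpr ((one_le_div hn0).mpr (by linarith))
  exact (abs_stdNormalCDF_mul_sub_le hscale z).trans (sqrt_add_div_self_sub_one_le hn0 hr0)

/-- for every `z ∈ ℝ`, real `n ≥ 1` and `r ∈ [0,1]`,
`|Φ(√((n+r)/n)·z) − Φ(z)| ≤ √r/√n` for the standard normal cdf `Φ`. -/
theorem abs_stdNormalCDF_scale_sub_le (z : ℝ) (n : ℝ) (hn : 1 ≤ n)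
    (r : ℝ) (hr0 : 0 ≤ r) (hr1 : r ≤ 1) :
    |stdNormalCDF (Real.sqrt ((n + r) / n) * z) - stdNormalCDF z|
      ≤ Real.sqrt r / Real.sqrt n :=
  abs_stdNormalCDF_scale_sub_le_general z n hn r hr0
end
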